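/- arXiv:1204.4835 — 9 statements merged into one kernel-verified Lean document; each statement's English description precedes it below -/
import Mathlib

section
/- Let S be a finite set of points in ℝ² with distinct x- and y-coordinates and injective priorities π. For each p ∈ S, the set Inf(p) = { q : q.y = p.y, q.x ≥ p.x, RMQ(q) = p } is an interval of the horizontal line y = p.y: if q₁, q₂ ∈ Inf(p) and q₁.x ≤ x ≤ q₂.x then (x, p.y) ∈ Inf(p). Moreover p itself (the left endpoint candidate) satisfies: if Inf(p) is nonempty then p ∈ Inf(p). -/
/-- `IsRMQ S pr q p` : `p` is the maximum-priority point of `S` in the 2-sided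
region (open to the top and left) with lower-right corner `q`, i.e. among
`{s ∈ S : s.x ≤ q.x, s.y ≥ q.y}`. -/
def IsRMQ (S : Finset (ℝ × ℝ)) (pr : ℝ × ℝ → ℝ) (q p : ℝ × ℝ) : Prop :=
  p ∈ S ∧ p.1 ≤ q.1 ∧ q.2 ≤ p.2 ∧ ∀ s ∈ S, s.1 ≤ q.1 → q.2 ≤ s.2 → pr s ≤ pr p

/-- The line of influence of `p`: points `q` on the horizontal line `y = p.y`
with `q.x ≥ p.x` whose 2-sided range-maximum is `p`. -/
def InfLine (S : Finset (ℝ × ℝ)) (pr : ℝ × ℝ → ℝ) (p : ℝ × ℝ) : Set (ℝ × ℝ) :=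
  {q | q.2 = p.2 ∧ p.1 ≤ q.1 ∧ IsRMQ S pr q p}

/-- General position: distinct points of `S` have distinct `x`- and `y`-coordinates. -/
def GenPos (S : Finset (ℝ × ℝ)) : Prop :=
  ∀ p ∈ S, ∀ q ∈ S, p ≠ q → p.1 ≠ q.1 ∧ p.2 ≠ q.2

/-- Each line of influence is an interval of the horizontal line `y = p.y`,
and if it is nonempty then its left endpoint is `p` itself. -/
theorem infLine_interval (S : Finset (ℝ × ℝ)) (pr : ℝ × ℝ → ℝ)
    (hgp : GenPos S) (hinj : Set.InjOn pr S) (p : ℝ × ℝ) (hp : p ∈ S) :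
    (∀ q₁ ∈ InfLine S pr p, ∀ q₂ ∈ InfLine S pr p, ∀ x : ℝ,
        q₁.1 ≤ x → x ≤ q₂.1 → (x, p.2) ∈ InfLine S pr p) ∧
    ((InfLine S pr p).Nonempty → p ∈ InfLine S pr p) := by
  constructor
  · rintro q₁ ⟨hy1, hx1, _⟩ q₂ ⟨hy2, hx2, _, _, _, hmax2⟩ x hxl hxr
    refine ⟨rfl, hx1.trans hxl, hp, hx1.trans hxl, le_refl _, ?_⟩
    intro s hs hsx hsy
    exact hmax2 s hs (hsx.trans hxr) (by rw [hy2]; exact hsy)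
  · rintro ⟨q, hy, hx, _, _, _, hmax⟩
    exact ⟨rfl, le_refl _, hp, le_refl _, le_refl _,
      fun s hs hsx hsy => hmax s hs (hsx.trans hx) (by rw [hy]; exact hsy)⟩
end

section
/- Let S be a finite set of points in ℝ² with distinct x- and y-coordinates and injective priorities, and let q ∈ ℝ² be a query point such that the region R(q) = {s ∈ S : s.x ≤ q.x, s.y ≥ q.y} is nonempty. Let p* = RMQ(q) be the maximum-priority point of R(q). Then the vertical ray shot upward from q hits Inf(p*) first: q' = (q.x, p*.y) ∈ Inf(p*), p*.y ≥ q.y, and for every p ∈ S with q.y ≤ p.y < p*.y, the point (q.x, p.y) is not in Inf(p). -/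
/-- Correctness of upward vertical ray shooting: if the 2-sided region of `q` is
nonempty and `p*` is its range maximum, then the upward ray from `q` hits
`Inf(p*)` first. -/
theorem ray_shooting_correct (S : Finset (ℝ × ℝ)) (pr : ℝ × ℝ → ℝ)
    (hgp : GenPos S) (hinj : Set.InjOn pr S) (q : ℝ × ℝ)
    (hne : ∃ s ∈ S, s.1 ≤ q.1 ∧ q.2 ≤ s.2)
    (pstar : ℝ × ℝ) (hstar : IsRMQ S pr q pstar) :
    (q.1, pstar.2) ∈ InfLine S pr pstar ∧ q.2 ≤ pstar.2 ∧
      ∀ p ∈ S, q.2 ≤ p.2 → p.2 < pstar.2 → (q.1, p.2) ∉ InfLine S pr p := by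
  obtain ⟨hpS, hpx, hpy, hmax⟩ := hstar
  refine ⟨⟨rfl, hpx, hpS, hpx, le_rfl, fun s hs hsx hsy => hmax s hs hsx (hpy.trans hsy)⟩,
    hpy, ?_⟩
  intro p hp hqp hppst ⟨hy, hx, hpS', hpx', hpy', hmax'⟩
  have h1 : pr pstar ≤ pr p := hmax' pstar hpS hpx (le_of_lt (by simpa [hy] using hppst))
  have h2 : pr p ≤ pr pstar := hmax p hp (by simpa [hy] using hx) hqp
  have : p = pstar := hinj hp hpS (le_antisymm h2 h1)
  exact absurd hppst (by simp [this])
end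

section
/- Let S be a finite set of points in ℝ² with distinct x- and y-coordinates and injective priorities. If q is a query point such that no segment Inf(p) (for p ∈ S) intersects the vertical ray {(q.x, y) : y ≥ q.y}, then the 2-sided region {s ∈ S : s.x ≤ q.x, s.y ≥ q.y} is empty. -/
/-! If the region of `q` contained a point, its maximum-priority point `p` would also be the
maximum for the corner `(q.x, p.y)`, which lies both on `Inf(p)` and on the ray above `q`. -/

namespace IsRMQ

variable {S : Finset (ℝ × ℝ)} {pr : ℝ × ℝ → ℝ} {q p : ℝ × ℝ}

theorem exists_of_nonempty (h : ∃ s ∈ S, s.1 ≤ q.1 ∧ q.2 ≤ s.2) : ∃ p, IsRMQ S pr q p := by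
  obtain ⟨s, hsS, hs⟩ := h
  obtain ⟨p, hp, hmax⟩ := (S.filter fun s => s.1 ≤ q.1 ∧ q.2 ≤ s.2).exists_max_image pr
    ⟨s, Finset.mem_filter.2 ⟨hsS, hs⟩⟩
  obtain ⟨hpS, hpx, hpy⟩ := Finset.mem_filter.1 hp
  exact ⟨p, hpS, hpx, hpy, fun t htS htx hty => hmax t (Finset.mem_filter.2 ⟨htS, htx, hty⟩)⟩

/-- The region of `q'` is a subset of that of `q` which still contains `p`. -/
theorem of_le (h : IsRMQ S pr q p) {q' : ℝ × ℝ} (hx : p.1 ≤ q'.1) (hx' : q'.1 ≤ q.1)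
    (hy : q.2 ≤ q'.2) (hy' : q'.2 ≤ p.2) : IsRMQ S pr q' p :=
  ⟨h.1, hx, hy', fun s hs hsx hsy => h.2.2.2 s hs (hsx.trans hx') (hy.trans hsy)⟩

theorem mem_infLine (h : IsRMQ S pr q p) : (q.1, p.2) ∈ InfLine S pr p :=
  ⟨rfl, h.2.1, h.of_le h.2.1 le_rfl h.2.2.1 le_rfl⟩

end IsRMQ

theorem no_hit_implies_empty_general (S : Finset (ℝ × ℝ)) (pr : ℝ × ℝ → ℝ) (q : ℝ × ℝ)
    (hmiss : ∀ p ∈ S, ∀ y : ℝ, q.2 ≤ y → (q.1, y) ∉ InfLine S pr p) :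
    ¬ ∃ s ∈ S, s.1 ≤ q.1 ∧ q.2 ≤ s.2 := by
  intro hne
  obtain ⟨p, hp⟩ := IsRMQ.exists_of_nonempty (pr := pr) hne
  exact hmiss p hp.1 p.2 hp.2.2.1 hp.mem_infLine

/-- If no line of influence intersects the upward vertical ray from `q`,
then the 2-sided region of `q` is empty. -/
theorem no_hit_implies_empty (S : Finset (ℝ × ℝ)) (pr : ℝ × ℝ → ℝ)
    (hgp : GenPos S) (hinj : Set.InjOn pr S) (q : ℝ × ℝ)
    (hmiss : ∀ p ∈ S, ∀ y : ℝ, q.2 ≤ y → (q.1, y) ∉ InfLine S pr p) :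
    ¬ ∃ s ∈ S, s.1 ≤ q.1 ∧ q.2 ≤ s.2 :=
  no_hit_implies_empty_general S pr q hmiss
end

section
/- Let S be a finite set of n points with distinct x- and y-coordinates and injective priorities. Call p ∈ S redundant if there is no q ∈ ℝ² with RMQ(q) = p. Then p is redundant if and only if there exists p' ∈ S with p'.x ≤ p.x, p'.y ≥ p.y, p' ≠ p, and priority(p') > priority(p). -/
/-- A point is redundant if it is never the answer to a 2-sided query. -/
def Redundant (S : Finset (ℝ × ℝ)) (pr : ℝ × ℝ → ℝ) (p : ℝ × ℝ) : Prop :=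
  ¬ ∃ q : ℝ × ℝ, IsRMQ S pr q p

/-- A point is redundant iff it is dominated (upper-left) by a point of higher
priority. -/
theorem redundant_iff_dominated (S : Finset (ℝ × ℝ)) (pr : ℝ × ℝ → ℝ)
    (hgp : GenPos S) (hinj : Set.InjOn pr S) (p : ℝ × ℝ) (hp : p ∈ S) :
    Redundant S pr p ↔
      ∃ p' ∈ S, p'.1 ≤ p.1 ∧ p.2 ≤ p'.2 ∧ p' ≠ p ∧ pr p < pr p' := by
  constructor
  · intro hred
    by_contra h
    push_neg at h
    exact hred ⟨p, hp, le_refl _, le_refl _, fun s hs hx hy => by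
      rcases eq_or_ne s p with rfl | hne
      · exact le_refl _
      · exact h s hs hx hy hne⟩
  · rintro ⟨p', hp', hx, hy, hne, hlt⟩ ⟨q, hqm, hqx, hqy, hmax⟩
    exact absurd (hmax p' hp' (hx.trans hqx) (hqy.trans hy)) (not_le.mpr hlt)
end

section
/- Let S be a finite set of points with distinct x- and y-coordinates and injective priorities. Fix a horizontal coordinate t, and let S' = { p ∈ S : p.x ≤ t and (t, p.y) ∈ Inf(p) } be the set of points whose line of influence crosses the vertical line x = t. If p, p' ∈ S' with p.y > p'.y then priority(p) < priority(p'). -/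
/-- Sweep-line invariant: among lines of influence active at `x = t`, higher
lines have lower priorities (priorities increase from top to bottom). -/
theorem sweep_invariant (S : Finset (ℝ × ℝ)) (pr : ℝ × ℝ → ℝ)
    (hgp : GenPos S) (hinj : Set.InjOn pr S) (t : ℝ) :
    ∀ p ∈ S, ∀ p' ∈ S, p.1 ≤ t → p'.1 ≤ t →
      (t, p.2) ∈ InfLine S pr p → (t, p'.2) ∈ InfLine S pr p' →
      p'.2 < p.2 → pr p < pr p' := by
  intro p hp p' hp' hpt hpt' hI hI' hy
  obtain ⟨-, -, -, -, -, hmax'⟩ := hI'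
  have hle : pr p ≤ pr p' := hmax' p hp hpt hy.le
  have hne : p ≠ p' := fun h => absurd (congrArg Prod.snd h) (by simpa using hy.ne')
  rcases lt_or_eq_of_le hle with h | h
  · exact h
  · exact absurd (hinj hp hp' h) hne
end

section
/- Let S, t, S' be as in the sweep-line setting, and let p_s ∈ S be a new point with p_s.x = t. If some p ∈ S' has p.y > p_s.y and priority(p) > priority(p_s), then Inf(p_s) = ∅, i.e., p_s is redundant. -/
/-- Case (i) of the plane sweep: if some active line of influence above the
newly arrived point `p_s` has higher priority, then `Inf(p_s)` is empty,
i.e., `p_s` is redundant. -/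
theorem sweep_case_i (S : Finset (ℝ × ℝ)) (pr : ℝ × ℝ → ℝ)
    (hgp : GenPos S) (hinj : Set.InjOn pr S) (t : ℝ)
    (ps : ℝ × ℝ) (hps : ps ∈ S) (hpsx : ps.1 = t)
    (p : ℝ × ℝ) (hp : p ∈ S) (hpx : p.1 < t)
    (hact : (t, p.2) ∈ InfLine S pr p)
    (hy : ps.2 < p.2) (hpr : pr ps < pr p) :
    InfLine S pr ps = ∅ := by
  ext q
  simp only [Set.mem_empty_iff_false, iff_false]
  rintro ⟨hq2, hq1, -, -, -, hmax⟩
  have := hmax p hp (le_trans hpx.le (hpsx ▸ hq1)) (by rw [hq2]; exact hy.le)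
  linarith
end

section
/- The number of distinct answer-functions of 1D range maximum queries on arrays of length m with pairwise distinct entries equals the Catalan number C_m = (1/(m+1))·binomial(2m, m); that is, two such arrays give the same function (i,j) ↦ argmax index of A on [i,j] if and only if their Cartesian trees coincide, and there are C_m Cartesian tree shapes. -/
/-!
An array with distinct entries on `[0, n)` has a unique Cartesian tree: the root is the position
`p` of the maximum, the left subtree is the Cartesian tree of `[0, p)` and the right one that of
`(p, n)`. The tree alone determines every range-maximum answer (`BinaryTree.rmq`), and conversely
the answers recover the tree (the root is the answer on the whole range). Since every tree shape
is realised by an array (number the nodes in postorder), the answer functions are in bijection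
with the binary trees on `m` nodes, of which there are `catalan m`.
-/

namespace BinaryTree

/-- `t` is the Cartesian tree of `A` on the window `[0, t.numNodes)`; the right subtree is the
Cartesian tree of the array shifted past the root. -/
def IsCartesianTree {α : Type*} [LT α] (A : ℕ → α) : BinaryTree Unit → Prop
  | nil => True
  | node _ l r => IsCartesianTree A l ∧ IsCartesianTree (fun k => A (l.numNodes + 1 + k)) r ∧
      ∀ k < l.numNodes + r.numNodes + 1, k ≠ l.numNodes → A k < A l.numNodes

/-- The answer to the range-maximum query on `[x, y]` for any array with Cartesian tree `t`. -/
def rmq : BinaryTree Unit → ℕ → ℕ → ℕ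
  | nil, x, _ => x
  | node _ l r, x, y =>
    if y < l.numNodes then l.rmq x y
    else if l.numNodes < x then
      l.numNodes + 1 + r.rmq (x - (l.numNodes + 1)) (y - (l.numNodes + 1))
    else l.numNodes

section rmq

variable (u : Unit) (l r : BinaryTree Unit)

theorem rmq_node_left {x y : ℕ} (hy : y < l.numNodes) : (node u l r).rmq x y = l.rmq x y := by
  simp [rmq, hy]

theorem rmq_node_right (x y : ℕ) :
    (node u l r).rmq (l.numNodes + 1 + x) (l.numNodes + 1 + y) = l.numNodes + 1 + r.rmq x y := by
  rw [rmq, if_neg (by omega), if_pos (by omega)]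
  simp

theorem rmq_node_root {x y : ℕ} (hx : x ≤ l.numNodes) (hy : l.numNodes ≤ y) :
    (node u l r).rmq x y = l.numNodes := by
  rw [rmq, if_neg (by omega), if_neg (by omega)]

end rmq

theorem rmq_mem_Icc : ∀ (t : BinaryTree Unit) {x y : ℕ}, x ≤ y → t.rmq x y ∈ Set.Icc x y
  | nil, _, _, hxy => ⟨le_rfl, hxy⟩
  | node u l r, x, y, hxy => by
    by_cases hy : y < l.numNodes
    · rw [rmq_node_left u l r hy]
      exact l.rmq_mem_Icc hxy
    by_cases hx : l.numNodes < x
    · obtain ⟨x, rfl⟩ : ∃ x', x = l.numNodes + 1 + x' := ⟨x - (l.numNodes + 1), by omega⟩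
      obtain ⟨y, rfl⟩ : ∃ y', y = l.numNodes + 1 + y' := ⟨y - (l.numNodes + 1), by omega⟩
      rw [rmq_node_right]
      have := r.rmq_mem_Icc (x := x) (y := y) (by omega)
      simp only [Set.mem_Icc] at this ⊢
      omega
    · rw [rmq_node_root u l r (by omega) (by omega)]
      exact ⟨by omega, by omega⟩

theorem IsCartesianTree.lt_rmq {α : Type*} [LT α] : ∀ {t : BinaryTree Unit} {A : ℕ → α},
    IsCartesianTree A t → ∀ {x y k : ℕ}, y < t.numNodes → k ∈ Set.Icc x y →
      k ≠ t.rmq x y → A k < A (t.rmq x y)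
  | nil, _, _, _, _, _, hy, _, _ => absurd hy (Nat.not_lt_zero _)
  | node u l r, A, ⟨hl, hr, hroot⟩, x, y, k, hy, ⟨hxk, hky⟩, hk => by
    by_cases hyl : y < l.numNodes
    · rw [rmq_node_left u l r hyl] at hk ⊢
      exact hl.lt_rmq hyl ⟨hxk, hky⟩ hk
    by_cases hx : l.numNodes < x
    · obtain ⟨x, rfl⟩ : ∃ x', x = l.numNodes + 1 + x' := ⟨x - (l.numNodes + 1), by omega⟩
      obtain ⟨y, rfl⟩ : ∃ y', y = l.numNodes + 1 + y' := ⟨y - (l.numNodes + 1), by omega⟩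
      obtain ⟨k, rfl⟩ : ∃ k', k = l.numNodes + 1 + k' := ⟨k - (l.numNodes + 1), by omega⟩
      rw [rmq_node_right] at hk ⊢
      exact hr.lt_rmq (by simp only [numNodes] at hy; omega) ⟨by omega, by omega⟩ (by omega)
    · rw [rmq_node_root u l r (by omega) (by omega)] at hk ⊢
      exact hroot k (by simp only [numNodes] at hy; omega) hk

theorem eq_of_rmq_eq : ∀ {t t' : BinaryTree Unit}, t.numNodes = t'.numNodes →
    (∀ x y, x ≤ y → y < t.numNodes → t.rmq x y = t'.rmq x y) → t = t'
  | nil, nil, _, _ => rfl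
  | node u l r, node u' l' r', hn, h => by
    simp only [numNodes] at hn
    have hroot : l.numNodes = l'.numNodes := by
      have := h 0 (l.numNodes + r.numNodes) (by omega) (by simp)
      rwa [rmq_node_root u l r (by omega) (by omega),
        rmq_node_root u' l' r' (by omega) (by omega)] at this
    have hl : l = l' := eq_of_rmq_eq hroot fun x y hxy hy => by
      rw [← rmq_node_left u l r hy, ← rmq_node_left u' l' r' (hroot ▸ hy)]
      exact h x y hxy (by simp only [numNodes]; omega)
    have hr : r = r' := eq_of_rmq_eq (by omega) fun x y hxy hy => by
      have := h (l.numNodes + 1 + x) (l.numNodes + 1 + y) (by omega)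
        (by simp only [numNodes]; omega)
      rw [rmq_node_right, hroot, rmq_node_right] at this
      omega
    rw [hl, hr]

theorem IsCartesianTree.of_lt_iff_lt {α β : Type*} [LT α] [LT β] :
    ∀ {t : BinaryTree Unit} {A : ℕ → α} {B : ℕ → β},
      (∀ j < t.numNodes, ∀ k < t.numNodes, (A j < A k ↔ B j < B k)) →
      IsCartesianTree A t → IsCartesianTree B t
  | nil, _, _, _, _ => trivial
  | node _ l r, _, _, h, ⟨hl, hr, hroot⟩ =>
    ⟨hl.of_lt_iff_lt fun j hj k hk =>
        h j (by simp only [numNodes]; omega) k (by simp only [numNodes]; omega),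
      hr.of_lt_iff_lt fun j hj k hk =>
        h _ (by simp only [numNodes]; omega) _ (by simp only [numNodes]; omega),
      fun k hk hne => (h k hk _ (by simp only [numNodes]; omega)).1 (hroot k hk hne)⟩

theorem exists_isCartesianTree {α : Type*} [LinearOrder α] (A : ℕ → α) (n : ℕ)
    (hA : Set.InjOn A (Set.Iio n)) :
    ∃ t : BinaryTree Unit, t.numNodes = n ∧ IsCartesianTree A t := by
  induction n using Nat.strong_induction_on generalizing A with
  | _ n ih =>
    rcases Nat.eq_zero_or_pos n with rfl | hn
    · exact ⟨nil, rfl, trivial⟩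
    obtain ⟨p, hp, hmax⟩ := (Finset.range n).exists_max_image A ⟨0, Finset.mem_range.2 hn⟩
    rw [Finset.mem_range] at hp
    obtain ⟨l, hl, hlA⟩ := ih p hp A (hA.mono fun k hk => lt_trans hk hp)
    obtain ⟨r, hr, hrA⟩ := ih (n - (p + 1)) (by omega) (fun k => A (p + 1 + k))
      fun j hj k hk hjk => by
        rw [Set.mem_Iio] at hj hk
        have := hA (Set.mem_Iio.2 (by omega)) (Set.mem_Iio.2 (by omega)) hjk
        omega
    refine ⟨node () l r, by simp; omega, hlA, hl ▸ hrA, fun k hk hkp => ?_⟩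
    have hkn : k < n := by omega
    rw [hl] at hkp ⊢
    exact lt_of_le_of_ne (hmax k (Finset.mem_range.2 hkn)) fun hAk => hkp (hA hkn hp hAk)

/-- The postorder numbering of the nodes of `t`, listed in inorder: every node gets a larger
label than its descendants, so `t` is the Cartesian tree of this array. -/
def canonicalArray : BinaryTree Unit → ℕ → ℕ
  | nil, _ => 0
  | node _ l r, k =>
    if k < l.numNodes then l.canonicalArray k
    else if k = l.numNodes then l.numNodes + r.numNodes
    else l.numNodes + r.canonicalArray (k - (l.numNodes + 1))

section canonicalArray

variable (u : Unit) (l r : BinaryTree Unit)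

theorem canonicalArray_node_left {k : ℕ} (hk : k < l.numNodes) :
    (node u l r).canonicalArray k = l.canonicalArray k := by
  rw [canonicalArray, if_pos hk]

theorem canonicalArray_node_root :
    (node u l r).canonicalArray l.numNodes = l.numNodes + r.numNodes := by
  rw [canonicalArray, if_neg (lt_irrefl _), if_pos rfl]

theorem canonicalArray_node_right (k : ℕ) :
    (node u l r).canonicalArray (l.numNodes + 1 + k) = l.numNodes + r.canonicalArray k := by
  rw [canonicalArray, if_neg (by omega), if_neg (by omega)]
  simp

end canonicalArray

theorem canonicalArray_lt :
    ∀ {t : BinaryTree Unit} {k : ℕ}, k < t.numNodes → t.canonicalArray k < t.numNodes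
  | nil, _, hk => absurd hk (Nat.not_lt_zero _)
  | node u l r, k, hk => by
    simp only [numNodes] at hk ⊢
    rcases lt_trichotomy k l.numNodes with hkl | rfl | hkl
    · rw [canonicalArray_node_left u l r hkl]
      exact (canonicalArray_lt hkl).trans_le (by omega)
    · rw [canonicalArray_node_root]
      omega
    · obtain ⟨k, rfl⟩ : ∃ k', k = l.numNodes + 1 + k' := ⟨k - (l.numNodes + 1), by omega⟩
      rw [canonicalArray_node_right]
      have := canonicalArray_lt (t := r) (k := k) (by omega)
      omega

theorem injOn_canonicalArray :
    ∀ t : BinaryTree Unit, Set.InjOn t.canonicalArray (Set.Iio t.numNodes)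
  | nil => fun _ hj => absurd hj (Nat.not_lt_zero _)
  | node _ l r => by
    intro j hj k hk hjk
    simp only [Set.mem_Iio, numNodes] at hj hk
    have hlj := canonicalArray_lt (t := l) (k := j)
    have hlk := canonicalArray_lt (t := l) (k := k)
    have hrj := canonicalArray_lt (t := r) (k := j - (l.numNodes + 1))
    have hrk := canonicalArray_lt (t := r) (k := k - (l.numNodes + 1))
    have hl : j < l.numNodes → k < l.numNodes →
        l.canonicalArray j = l.canonicalArray k → j = k :=
      fun h1 h2 => injOn_canonicalArray l h1 h2
    have hr : j - (l.numNodes + 1) < r.numNodes → k - (l.numNodes + 1) < r.numNodes →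
        r.canonicalArray (j - (l.numNodes + 1)) = r.canonicalArray (k - (l.numNodes + 1)) →
        j - (l.numNodes + 1) = k - (l.numNodes + 1) :=
      fun h1 h2 => injOn_canonicalArray r h1 h2
    unfold canonicalArray at hjk
    split_ifs at hjk <;> omega

theorem isCartesianTree_canonicalArray :
    ∀ t : BinaryTree Unit, IsCartesianTree t.canonicalArray t
  | nil => trivial
  | node u l r => by
    refine ⟨(isCartesianTree_canonicalArray l).of_lt_iff_lt fun j hj k hk => ?_,
      (isCartesianTree_canonicalArray r).of_lt_iff_lt fun j hj k hk => ?_, fun k hk hkl => ?_⟩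
    · rw [canonicalArray_node_left u l r hj, canonicalArray_node_left u l r hk]
    · rw [canonicalArray_node_right, canonicalArray_node_right, Nat.add_lt_add_iff_left]
    · rw [canonicalArray_node_root]
      rcases lt_or_gt_of_ne hkl with hkl | hkl
      · rw [canonicalArray_node_left u l r hkl]
        have := canonicalArray_lt hkl
        omega
      · obtain ⟨k, rfl⟩ : ∃ k', k = l.numNodes + 1 + k' :=
          ⟨k - (l.numNodes + 1), by omega⟩
        rw [canonicalArray_node_right]
        have := canonicalArray_lt (t := r) (k := k) (by omega)
        omega

end BinaryTree

open BinaryTree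

def IsRMQAnswer {α : Type*} [LE α] {m : ℕ} (A : Fin m → α) (f : Fin m → Fin m → Fin m) :
    Prop :=
  ∀ i j, (i ≤ j → f i j ∈ Finset.Icc i j ∧ ∀ k ∈ Finset.Icc i j, A k ≤ A (f i j)) ∧
    (j < i → f i j = i)

theorem exists_isRMQAnswer {α : Type*} [LinearOrder α] {m : ℕ} (A : Fin m → α) :
    ∃ f, IsRMQAnswer A f := by
  have (i j : Fin m) : ∃ p, (i ≤ j → p ∈ Finset.Icc i j ∧ ∀ k ∈ Finset.Icc i j, A k ≤ A p) ∧
      (j < i → p = i) := by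
    rcases le_or_gt i j with hij | hji
    · obtain ⟨p, hp, hmax⟩ :=
        (Finset.Icc i j).exists_max_image A ⟨i, Finset.mem_Icc.2 ⟨le_rfl, hij⟩⟩
      exact ⟨p, fun _ => ⟨hp, hmax⟩, fun hji => absurd hij (not_le.2 hji)⟩
    · exact ⟨i, fun hij => absurd hij (not_le.2 hji), fun _ => rfl⟩
  choose f hf using this
  exact ⟨f, hf⟩

namespace IsRMQAnswer

variable {α β : Type*} {m : ℕ} {f : Fin m → Fin m → Fin m} {t : BinaryTree Unit}

theorem val_eq_rmq [Preorder α] {A : Fin m → α} {B : ℕ → α} (hf : IsRMQAnswer A f)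
    (hB : ∀ i : Fin m, B i = A i) (ht : IsCartesianTree B t) (hm : t.numNodes = m)
    {i j : Fin m} (hij : i ≤ j) : (f i j : ℕ) = t.rmq i j := by
  obtain ⟨hmem, hmax⟩ := (hf i j).1 hij
  rw [Finset.mem_Icc] at hmem
  obtain ⟨hxp, hpy⟩ := t.rmq_mem_Icc (Fin.le_def.1 hij)
  set p : Fin m := ⟨t.rmq i j, hpy.trans_lt j.2⟩
  by_contra hne
  have hlt := ht.lt_rmq (hm ▸ j.2) ⟨Fin.le_def.1 hmem.1, Fin.le_def.1 hmem.2⟩ hne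
  have hle := hmax p (Finset.mem_Icc.2 ⟨Fin.le_def.2 hxp, Fin.le_def.2 hpy⟩)
  rw [hB, show t.rmq i j = (p : ℕ) from rfl, hB] at hlt
  exact hlt.not_ge hle

theorem eq_of_isCartesianTree [Preorder α] [Preorder β] {A : Fin m → α} {A' : Fin m → β}
    {B : ℕ → α} {B' : ℕ → β} {f' : Fin m → Fin m → Fin m}
    (hf : IsRMQAnswer A f) (hf' : IsRMQAnswer A' f')
    (hB : ∀ i : Fin m, B i = A i) (hB' : ∀ i : Fin m, B' i = A' i)
    (ht : IsCartesianTree B t) (ht' : IsCartesianTree B' t) (hm : t.numNodes = m) : f = f' := by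
  funext i j
  rcases le_or_gt i j with hij | hji
  · exact Fin.ext ((hf.val_eq_rmq hB ht hm hij).trans (hf'.val_eq_rmq hB' ht' hm hij).symm)
  · rw [(hf i j).2 hji, (hf' i j).2 hji]

theorem tree_eq [Preorder α] [Preorder β] {A : Fin m → α} {A' : Fin m → β}
    {B : ℕ → α} {B' : ℕ → β} {t' : BinaryTree Unit}
    (hf : IsRMQAnswer A f) (hf' : IsRMQAnswer A' f)
    (hB : ∀ i : Fin m, B i = A i) (hB' : ∀ i : Fin m, B' i = A' i)
    (ht : IsCartesianTree B t) (ht' : IsCartesianTree B' t')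
    (hm : t.numNodes = m) (hm' : t'.numNodes = m) : t = t' :=
  eq_of_rmq_eq (hm.trans hm'.symm) fun x y hxy hy => by
    have hy : y < m := hm ▸ hy
    rw [← hf.val_eq_rmq hB ht hm (i := ⟨x, by omega⟩) (j := ⟨y, hy⟩) hxy,
      ← hf'.val_eq_rmq hB' ht' hm' (i := ⟨x, by omega⟩) (j := ⟨y, hy⟩) hxy]

end IsRMQAnswer

theorem Function.Injective.exists_isCartesianTree_extend {α : Type*} [LinearOrder α] {m : ℕ}
    {A : Fin m → α} (hA : Function.Injective A) (e : ℕ → α) :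
    ∃ t : BinaryTree Unit, t.numNodes = m ∧
      IsCartesianTree (Function.extend Fin.val A e) t := by
  refine exists_isCartesianTree _ m fun x hx y hy hxy => ?_
  rw [Set.mem_Iio] at hx hy
  rw [show x = (⟨x, hx⟩ : Fin m).val from rfl, show y = (⟨y, hy⟩ : Fin m).val from rfl,
    Fin.val_injective.extend_apply, Fin.val_injective.extend_apply] at hxy
  exact Fin.val_eq_of_eq (hA hxy)

/-- The number of distinct answer-functions of 1D range maximum queries on
arrays of length `m` with pairwise distinct entries equals the Catalan number
`C_m = (1/(m+1))·binomial(2m, m)`.  An answer-function sends a pair `i ≤ j` to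
the argmax index of `A` on `[i, j]` (and is pinned to `i` for `j < i`). -/
theorem rmq_answer_functions_card (m : ℕ) :
    {f : Fin m → Fin m → Fin m | ∃ A : Fin m → ℝ, Function.Injective A ∧
        ∀ i j : Fin m,
          (i ≤ j → f i j ∈ Finset.Icc i j ∧ ∀ k ∈ Finset.Icc i j, A k ≤ A (f i j)) ∧
          (j < i → f i j = i)}.ncard = catalan m ∧
    catalan m = (2 * m).choose m / (m + 1) := by
  refine ⟨?_, catalan_eq_centralBinom_div m⟩
  set canonical : BinaryTree Unit → ℕ → ℝ := fun t k => (t.canonicalArray k : ℝ)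
  have hcanon (t : BinaryTree Unit) : IsCartesianTree (canonical t) t :=
    t.isCartesianTree_canonicalArray.of_lt_iff_lt fun _ _ _ _ => Nat.cast_lt.symm
  choose F hF using fun t : BinaryTree Unit => exists_isRMQAnswer fun i : Fin m => canonical t i
  have himage : {f | ∃ A : Fin m → ℝ, Function.Injective A ∧ IsRMQAnswer A f} =
      F '' {t | t.numNodes = m} := by
    ext f
    constructor
    · rintro ⟨A, hA, hf⟩
      obtain ⟨t, hm, ht⟩ := hA.exists_isCartesianTree_extend 0
      exact ⟨t, hm, (hF t).eq_of_isCartesianTree hf (fun _ => rfl)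
        (Fin.val_injective.extend_apply A 0) (hcanon t) ht hm⟩
    · rintro ⟨t, hm, rfl⟩
      refine ⟨_, fun i j hij => Fin.ext ?_, hF t⟩
      exact t.injOn_canonicalArray (hm ▸ i.2) (hm ▸ j.2) (Nat.cast_injective hij)
  have hinj : Set.InjOn F {t | t.numNodes = m} := fun t ht t' ht' hFt =>
    (hF t).tree_eq (hFt ▸ hF t') (fun _ => rfl) (fun _ => rfl) (hcanon t) (hcanon t') ht ht'
  calc Set.ncard _ = (F '' {t | t.numNodes = m}).ncard := congrArg Set.ncard himage
    _ = catalan m := by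
      rw [hinj.ncard_image, ← coe_treesOfNumNodesEq, Set.ncard_coe_finset,
        treesOfNumNodesEq_card_eq_catalan]
end

section
/- Define the recursion S(n) = 2·√(n/L)·S(√(nL)) + c·n·√(log n) for n > L² (with L = log N and c > 0 a constant), and S(n) ≤ c'·n·log n for n ≤ L². Then, unrolling, after r levels the subproblem size is n_r = N^{1/2^r}·L^{1−1/2^r}, and for the first r with 2^r ≥ log N / log log N one has S(N) = O(N log N). -/
/-!
For `T n = S n / n` the recursion reads `T n = 2 T (√(n L)) + c √(log₂ n)`, because
`√(n / L) · √(n L) = n`. Along the chain `n_r = N^(1/2^r) L^(1 - 1/2^r)` one has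
`2^r log₂ n_r = log₂ N + (2^r - 1) log₂ L`, so at every level `j` before the first level `k`
with `n_k ≤ L²` we get `(2^j + 1) log₂ L < log₂ N`. Unrolling `k` levels gives
`T N ≤ 2^k T n_k + c ∑_{j<k} 2^j √(log₂ n_j)`. The leaf term is at most `3 c' log₂ N`, and since
`2^j log₂ n_j ≤ 2 log₂ N` and `2^k ≤ 2 log₂ N`, the sum is dominated by a geometric series with
ratio `√2`, of total at most `2 (√2 + 1) log₂ N`.
-/

open Real Finset

noncomputable def subproblemSize (N L : ℝ) (r : ℕ) : ℝ :=
  N ^ ((1 : ℝ) / 2 ^ r) * L ^ (1 - (1 : ℝ) / 2 ^ r)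

section SubproblemSize

variable {N L : ℝ}

theorem subproblemSize_zero (N L : ℝ) : subproblemSize N L 0 = N := by
  simp [subproblemSize]

theorem subproblemSize_pos (hN : 0 < N) (hL : 0 < L) (r : ℕ) : 0 < subproblemSize N L r := by
  unfold subproblemSize; positivity

theorem one_le_subproblemSize (hN : 1 ≤ N) (hL : 1 ≤ L) (r : ℕ) : 1 ≤ subproblemSize N L r :=
  one_le_mul_of_one_le_of_one_le (one_le_rpow hN (by positivity))
    (one_le_rpow hL (sub_nonneg.2 (div_le_one_of_le₀ (one_le_pow₀ one_le_two) (by positivity))))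

theorem sqrt_subproblemSize_mul (hN : 0 ≤ N) (hL : 0 ≤ L) (r : ℕ) :
    √(subproblemSize N L r * L) = subproblemSize N L (r + 1) := by
  have hexp : (1 - (1 : ℝ) / 2 ^ r) + 1 ≠ 0 := by
    have : (1 : ℝ) / 2 ^ r ≤ 1 := div_le_one_of_le₀ (one_le_pow₀ one_le_two) (by positivity)
    linarith
  rw [subproblemSize, mul_assoc, ← rpow_add_one' hL hexp, sqrt_eq_rpow,
    mul_rpow (by positivity) (by positivity), ← rpow_mul hN, ← rpow_mul hL, subproblemSize]
  congr 2 <;> rw [pow_succ] <;> ring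

theorem iterate_sqrt_mul_eq_subproblemSize (hN : 0 ≤ N) (hL : 0 ≤ L) (r : ℕ) :
    (fun x => √(x * L))^[r] N = subproblemSize N L r := by
  induction r with
  | zero => exact (subproblemSize_zero N L).symm
  | succ r ih => rw [Function.iterate_succ_apply', ih, sqrt_subproblemSize_mul hN hL]

theorem two_pow_mul_logb_subproblemSize (b : ℝ) (hN : 0 < N) (hL : 0 < L) (r : ℕ) :
    2 ^ r * logb b (subproblemSize N L r) = logb b N + (2 ^ r - 1) * logb b L := by
  rw [subproblemSize, logb_mul (by positivity) (by positivity), logb_rpow_eq_mul_logb_of_pos hN,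
    logb_rpow_eq_mul_logb_of_pos hL]
  field_simp

theorem sq_lt_subproblemSize_iff (hN : 0 < N) (hL : 0 < L) (r : ℕ) :
    L ^ 2 < subproblemSize N L r ↔ (2 ^ r + 1) * logb 2 L < logb 2 N := by
  rw [← logb_lt_logb_iff one_lt_two (by positivity) (subproblemSize_pos hN hL r), logb_pow,
    ← mul_lt_mul_iff_of_pos_left (by positivity : (0 : ℝ) < 2 ^ r),
    two_pow_mul_logb_subproblemSize 2 hN hL]
  constructor <;> intro h <;> push_cast at * <;> linarith

theorem exists_subproblemSize_le_sq (hN : 0 < N) (hL : 1 < L) :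
    ∃ r, subproblemSize N L r ≤ L ^ 2 := by
  have hs : 0 < logb 2 L := logb_pos one_lt_two hL
  obtain ⟨r, hr⟩ := pow_unbounded_of_one_lt (logb 2 N / logb 2 L) one_lt_two
  refine ⟨r, not_lt.1 fun h => ?_⟩
  rw [sq_lt_subproblemSize_iff hN (by linarith)] at h
  rw [div_lt_iff₀ hs] at hr
  linarith

theorem exists_first_subproblemSize_le_sq (hN : 0 < N) (hL : 1 < L) :
    ∃ k, subproblemSize N L k ≤ L ^ 2 ∧ ∀ j < k, L ^ 2 < subproblemSize N L j := by
  classical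
  have h := exists_subproblemSize_le_sq hN hL
  exact ⟨Nat.find h, Nat.find_spec h, fun j hj => not_le.1 (Nat.find_min h hj)⟩

end SubproblemSize

theorem div_eq_two_mul_div_sqrt_add {S : ℝ → ℝ} {x L a : ℝ} (hx : 0 < x) (hL : 0 < L)
    (h : S x = 2 * √(x / L) * S (√(x * L)) + x * a) :
    S x / x = 2 * (S (√(x * L)) / √(x * L)) + a := by
  have hy : 0 < √(x * L) := sqrt_pos.2 (mul_pos hx hL)
  have hxy : √(x / L) = x / √(x * L) := by
    rw [eq_div_iff hy.ne', ← sqrt_mul (div_nonneg hx.le hL.le),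
      show x / L * (x * L) = x ^ 2 by field_simp, sqrt_sq hx.le]
  rw [h, hxy]
  field_simp

theorem le_two_pow_mul_add_sum {T a : ℕ → ℝ} {k : ℕ} (h : ∀ j < k, T j ≤ 2 * T (j + 1) + a j) :
    T 0 ≤ 2 ^ k * T k + ∑ j ∈ range k, 2 ^ j * a j := by
  induction k with
  | zero => simp
  | succ k ih =>
    have hk := mul_le_mul_of_nonneg_left (h k k.lt_succ_self) (pow_nonneg zero_le_two k)
    rw [sum_range_succ, pow_succ]
    linarith [ih fun j hj => h j (by omega)]

theorem sum_two_pow_mul_sqrt_le {ℓ : ℕ → ℝ} {k : ℕ} {A : ℝ} (hℓ : ∀ j < k, 2 ^ j * ℓ j ≤ A)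
    (hk : 2 ^ k ≤ A) : ∑ j ∈ range k, 2 ^ j * √(ℓ j) ≤ (√2 + 1) * A := by
  have hA : 0 ≤ A := le_trans (by positivity) hk
  have hsqrt_pow : ∀ j : ℕ, √((2 : ℝ) ^ j) = √2 ^ j := fun j => by
    rw [sqrt_eq_iff_mul_self_eq_of_pos (by positivity), ← mul_pow, mul_self_sqrt zero_le_two]
  have hterm : ∀ j ∈ range k, 2 ^ j * √(ℓ j) ≤ √A * √2 ^ j := fun j hj => by
    calc 2 ^ j * √(ℓ j) = √(2 ^ j * ℓ j) * √2 ^ j := by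
          rw [sqrt_mul (by positivity), hsqrt_pow, mul_right_comm, ← mul_pow,
            mul_self_sqrt zero_le_two]
      _ ≤ √A * √2 ^ j := by gcongr; exact hℓ j (mem_range.1 hj)
  have hgeom : ∑ j ∈ range k, √2 ^ j ≤ (√2 + 1) * √A := by
    have h1 : 1 < √2 := by rw [lt_sqrt zero_le_one]; norm_num
    have h2 : √2 * √2 = 2 := mul_self_sqrt zero_le_two
    rw [geom_sum_eq h1.ne', div_le_iff₀ (by linarith)]
    rw [show (√2 + 1) * √A * (√2 - 1) = √A by linear_combination √A * h2]
    linarith [hsqrt_pow k ▸ sqrt_le_sqrt hk]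
  calc ∑ j ∈ range k, 2 ^ j * √(ℓ j) ≤ ∑ j ∈ range k, √A * √2 ^ j := sum_le_sum hterm
    _ = √A * ∑ j ∈ range k, √2 ^ j := (mul_sum ..).symm
    _ ≤ √A * ((√2 + 1) * √A) := by gcongr
    _ = (√2 + 1) * A := by rw [mul_left_comm, mul_self_sqrt hA]

section StoppingLevel

variable {t s : ℝ} {k : ℕ}

theorem two_pow_le_of_forall_lt (hs : 1 ≤ s) (ht : 1 ≤ t) (h : ∀ j < k, (2 ^ j + 1) * s < t) :
    (2 : ℝ) ^ k ≤ 2 * t := by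
  cases k with
  | zero => linarith [pow_zero (2 : ℝ)]
  | succ m => nlinarith [h m m.lt_succ_self, pow_succ (2 : ℝ) m, pow_pos (two_pos (α := ℝ)) m]

theorem two_pow_sub_one_mul_le_of_forall_lt (hs : 0 ≤ s) (ht : 0 ≤ t)
    (h : ∀ j < k, (2 ^ j + 1) * s < t) : (2 ^ k - 1) * s ≤ 2 * t := by
  cases k with
  | zero => simpa using ht
  | succ m => nlinarith [h m m.lt_succ_self, pow_succ (2 : ℝ) m]

end StoppingLevel

theorem le_mul_logb_of_space_recursion {S : ℝ → ℝ} {N L c c' : ℝ} (hN : 2 ≤ N) (hL : 2 ≤ L)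
    (hc : 0 ≤ c) (hc' : 0 ≤ c')
    (hbase : ∀ x, 1 ≤ x → x ≤ L ^ 2 → S x ≤ c' * x * logb 2 x)
    (hrec : ∀ x, L ^ 2 < x → S x = 2 * √(x / L) * S (√(x * L)) + c * x * √(logb 2 x)) :
    S N ≤ (3 * c' + 5 * c) * N * logb 2 N := by
  have hN0 : 0 < N := by linarith
  have hL0 : 0 < L := by linarith
  have ht : 1 ≤ logb 2 N := by simpa using logb_le_logb_of_le one_lt_two two_pos hN
  have hs : 1 ≤ logb 2 L := by simpa using logb_le_logb_of_le one_lt_two two_pos hL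
  obtain ⟨k, hk, hmin⟩ := exists_first_subproblemSize_le_sq hN0 (by linarith : 1 < L)
  set n := subproblemSize N L
  have hstep j : √(n j * L) = n (j + 1) := sqrt_subproblemSize_mul hN0.le hL0.le j
  have hlt j (hj : j < k) : (2 ^ j + 1) * logb 2 L < logb 2 N :=
    (sq_lt_subproblemSize_iff hN0 hL0 j).1 (hmin j hj)
  have hunroll := le_two_pow_mul_add_sum (T := fun j => S (n j) / n j)
    (a := fun j => c * √(logb 2 (n j))) (k := k) fun j hj => by
      rw [← hstep]
      exact (div_eq_two_mul_div_sqrt_add (subproblemSize_pos hN0 hL0 j) hL0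
        (by rw [hrec _ (hmin j hj)]; ring)).le
  have hleaf : 2 ^ k * (S (n k) / n k) ≤ 3 * c' * logb 2 N := by
    have hS : S (n k) / n k ≤ c' * logb 2 (n k) := by
      rw [div_le_iff₀ (subproblemSize_pos hN0 hL0 k)]
      linarith [hbase _ (one_le_subproblemSize (by linarith) (by linarith) k) hk]
    have := two_pow_mul_logb_subproblemSize 2 hN0 hL0 k
    have := two_pow_sub_one_mul_le_of_forall_lt (by linarith) (by linarith) hlt
    nlinarith [mul_le_mul_of_nonneg_left hS (pow_nonneg zero_le_two k)]
  have hsum : ∑ j ∈ range k, 2 ^ j * (c * √(logb 2 (n j))) ≤ 5 * c * logb 2 N := by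
    have hgeom := sum_two_pow_mul_sqrt_le (ℓ := fun j => logb 2 (n j))
      (fun j hj => by linarith [two_pow_mul_logb_subproblemSize 2 hN0 hL0 j, hlt j hj])
      (two_pow_le_of_forall_lt hs ht hlt)
    have hsqrt2 : √2 ≤ 3 / 2 := by nlinarith [sq_sqrt zero_le_two, sqrt_nonneg 2]
    simp_rw [mul_left_comm _ c, ← mul_sum]
    nlinarith [mul_le_mul_of_nonneg_left hgeom hc,
      mul_le_mul_of_nonneg_left hsqrt2 (mul_nonneg hc (by linarith : 0 ≤ logb 2 N))]
  calc S N = N * (S (n 0) / n 0) := by rw [show n 0 = N from subproblemSize_zero N L]; field_simp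
    _ ≤ N * (3 * c' * logb 2 N + 5 * c * logb 2 N) := by gcongr; linarith
    _ = (3 * c' + 5 * c) * N * logb 2 N := by ring

/-- Unrolling the space recursion `S(n) = 2·√(n/L)·S(√(nL)) + c·n·√(log n)` (for
`n > L²`, where `L = log₂ N`) with base case `S(n) ≤ c'·n·log n` for `n ≤ L²`:
after `r` levels the subproblem size is `N^(1/2^r)·L^(1−1/2^r)`, and
`S(N) = O(N log N)`. -/
theorem space_recursion_bound (c c' : ℝ) (hc : 0 < c) (hc' : 0 < c') :
    ∃ C : ℝ, 0 < C ∧ ∃ N₀ : ℕ, ∀ N : ℕ, N₀ ≤ N →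
      (∀ r : ℕ,
        (fun x : ℝ => Real.sqrt (x * Real.logb 2 N))^[r] N =
          (N : ℝ) ^ ((1 : ℝ) / 2 ^ r) *
            (Real.logb 2 N) ^ (1 - (1 : ℝ) / 2 ^ r)) ∧
      ∀ S : ℝ → ℝ,
        (∀ x : ℝ, 1 ≤ x → x ≤ (Real.logb 2 N) ^ 2 → S x ≤ c' * x * Real.logb 2 x) →
        (∀ x : ℝ, (Real.logb 2 N) ^ 2 < x →
          S x = 2 * Real.sqrt (x / Real.logb 2 N) * S (Real.sqrt (x * Real.logb 2 N)) +
            c * x * Real.sqrt (Real.logb 2 x)) →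
        S N ≤ C * N * Real.logb 2 N := by
  refine ⟨3 * c' + 5 * c, by positivity, 4, fun N hN => ?_⟩
  have hN4 : (2 : ℝ) ^ 2 ≤ N := by norm_num; exact_mod_cast hN
  have hL : 2 ≤ logb 2 (N : ℝ) := by
    simpa [logb_pow] using logb_le_logb_of_le one_lt_two (by norm_num) hN4
  exact ⟨iterate_sqrt_mul_eq_subproblemSize (by positivity) (by linarith),
    fun S hbase hrec => le_mul_logb_of_space_recursion (by linarith) hL hc.le hc'.le hbase hrec⟩
end

section
/- For points in 2D rank space on [n] × [n], the slab-rank map is a bijection: given a horizontal slab consisting of the points with y-coordinates in an interval J of size k, the map sending a point (i, j) of the slab to (i', j') — where j' = j − min(J) and i' is the number of slab points with x-coordinate strictly less than i — is a bijection from the slab's point set onto a point set in rank space on [k] × [k] (i.e., the images have x-coordinates exactly {0,...,k−1} and y-coordinates a permutation of {0,...,k−1}), and it preserves the relative order of both coordinates. -/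
/-!
The `x`-component of the map is the rank of `p.1` among the `x`-coordinates of the slab. Ranks
in a finite set of distinct keys are strictly monotone and fill `{0, …, #slab - 1}`, and since the
`y`-coordinates of `S` form the permutation `{0, …, n-1}`, the slab holds exactly one point for each
`y ∈ [j₀, j₀ + k)`, so `#slab = k` and subtracting `j₀` maps its `y`-coordinates onto `{0, …, k-1}`.
-/

open Finset

namespace Finset

section RankBelow

variable {ι α : Type*} [LinearOrder α] (T : Finset ι) (f : ι → α)

theorem card_filter_lt_mono {a b : α} (hab : a ≤ b) :
    #(T.filter (f · < a)) ≤ #(T.filter (f · < b)) :=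
  card_le_card (monotone_filter_right T fun _ _ h => h.trans_le hab)

variable {T} {p : ι}

theorem card_filter_lt_lt_card (hp : p ∈ T) : #(T.filter (f · < f p)) < #T :=
  card_lt_card (filter_ssubset.2 ⟨p, hp, lt_irrefl _⟩)

theorem card_filter_lt_lt_iff (hp : p ∈ T) {b : α} :
    #(T.filter (f · < f p)) < #(T.filter (f · < b)) ↔ f p < b := by
  refine ⟨fun h => lt_of_not_ge fun hb => (card_filter_lt_mono T f hb).not_gt h, fun h => ?_⟩
  refine card_lt_card ⟨monotone_filter_right T fun _ _ hs => hs.trans h, fun hsub => ?_⟩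
  exact lt_irrefl _ (mem_filter.1 (hsub (mem_filter.2 ⟨hp, h⟩))).2

theorem injOn_card_filter_lt (hf : Set.InjOn f T) :
    Set.InjOn (fun p => #(T.filter (f · < f p))) T := by
  intro p hp q hq hpq
  refine hf hp hq (le_antisymm ?_ ?_) <;> refine le_of_not_gt fun hlt => ?_
  · exact (((card_filter_lt_lt_iff f hq).2 hlt).ne hpq.symm)
  · exact (((card_filter_lt_lt_iff f hp).2 hlt).ne hpq)

theorem image_card_filter_lt_eq_range (hf : Set.InjOn f T) :
    T.image (fun p => #(T.filter (f · < f p))) = range #T := by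
  refine eq_of_subset_of_card_le (fun i hi => ?_) ?_
  · obtain ⟨p, hp, rfl⟩ := mem_image.1 hi
    exact mem_range.2 (card_filter_lt_lt_card f hp)
  · rw [card_range, card_image_of_injOn (injOn_card_filter_lt f hf)]

end RankBelow

end Finset

section Slab

variable {n j₀ k : ℕ} {S : Finset (ℕ × ℕ)}

def horizontalSlab (S : Finset (ℕ × ℕ)) (j₀ k : ℕ) : Finset (ℕ × ℕ) :=
  S.filter fun p => j₀ ≤ p.2 ∧ p.2 < j₀ + k

theorem horizontalSlab_subset : horizontalSlab S j₀ k ⊆ S :=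
  filter_subset _ _

theorem image_snd_horizontalSlab (hy : S.image Prod.snd = range n) (hjk : j₀ + k ≤ n) :
    (horizontalSlab S j₀ k).image Prod.snd = Ico j₀ (j₀ + k) := by
  rw [horizontalSlab, ← filter_image (p := fun j => j₀ ≤ j ∧ j < j₀ + k), hy]
  ext j
  simp only [mem_filter, mem_range, mem_Ico]
  omega

theorem card_horizontalSlab (hcard : S.card = n) (hy : S.image Prod.snd = range n)
    (hjk : j₀ + k ≤ n) : #(horizontalSlab S j₀ k) = k := by
  have hsnd : Set.InjOn Prod.snd (S : Set (ℕ × ℕ)) :=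
    injOn_of_card_image_eq (by rw [hy, card_range, hcard])
  rw [← card_image_of_injOn (hsnd.mono (coe_subset.2 horizontalSlab_subset)),
    image_snd_horizontalSlab hy hjk, Nat.card_Ico, Nat.add_sub_cancel_left]

end Slab

/-- The slab-rank map is a bijection onto rank space: for points in rank space
on `[n] × [n]`, a horizontal slab of height `k` (points with `y`-coordinates in
`[j₀, j₀ + k)`) contains exactly `k` points, and the map
`(i, j) ↦ (#{slab points with x < i}, j − j₀)` is injective on the slab, its
image has `x`-coordinates exactly `{0, …, k−1}` and `y`-coordinates exactly
`{0, …, k−1}`, and it preserves the relative order of both coordinates. -/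
theorem slab_rank_bijection (n k j₀ : ℕ) (S : Finset (ℕ × ℕ))
    (hcard : S.card = n)
    (hx : S.image Prod.fst = Finset.range n)
    (hy : S.image Prod.snd = Finset.range n)
    (hjk : j₀ + k ≤ n) :
    ∀ slab : Finset (ℕ × ℕ), slab = S.filter (fun p => j₀ ≤ p.2 ∧ p.2 < j₀ + k) →
    ∀ φ : ℕ × ℕ → ℕ × ℕ,
      (∀ p, φ p = ((slab.filter (fun s => s.1 < p.1)).card, p.2 - j₀)) →
      slab.card = k ∧
      Set.InjOn φ ↑slab ∧
      (slab.image φ).image Prod.fst = Finset.range k ∧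
      (slab.image φ).image Prod.snd = Finset.range k ∧
      ∀ p ∈ slab, ∀ q ∈ slab,
        (p.1 < q.1 ↔ (φ p).1 < (φ q).1) ∧ (p.2 < q.2 ↔ (φ p).2 < (φ q).2) := by
  rintro slab hslab φ hφ
  obtain rfl : φ = fun p => (#(slab.filter (·.1 < p.1)), p.2 - j₀) := funext hφ
  replace hslab : slab = horizontalSlab S j₀ k := hslab
  have hfst : Set.InjOn Prod.fst (slab : Set (ℕ × ℕ)) :=
    (injOn_of_card_image_eq (s := S) (by rw [hx, card_range, hcard])).mono
      (coe_subset.2 (hslab ▸ horizontalSlab_subset))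
  have hcard_slab : #slab = k := hslab ▸ card_horizontalSlab hcard hy hjk
  refine ⟨hcard_slab, ?_, ?_, ?_, fun p hp q hq => ⟨(card_filter_lt_lt_iff Prod.fst hp).symm, ?_⟩⟩
  · exact fun p hp q hq hpq => injOn_card_filter_lt Prod.fst hfst hp hq (congrArg Prod.fst hpq)
  · rw [image_image, ← hcard_slab]
    exact image_card_filter_lt_eq_range Prod.fst hfst
  · rw [image_image, show Prod.snd ∘ _ = (· - j₀) ∘ Prod.snd from rfl, ← image_image, hslab,
      image_snd_horizontalSlab hy hjk, Nat.image_sub_const_Ico le_rfl, Nat.sub_self,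
      Nat.add_sub_cancel_left, range_eq_Ico]
  · have := (mem_filter.1 (hslab ▸ hp)).2
    have := (mem_filter.1 (hslab ▸ hq)).2
    dsimp only
    omega
end
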